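/- arXiv:2512.12062 — 6 statements merged into one kernel-verified Lean document; each statement's English description precedes it below -/
import Mathlib

section
/- Consider the θ-scheme setting below with M and A self-adjoint. Then for every n ≥ 1 the discrete energy identity ⟪F^n, u^{n+1} − u^{n−1}⟫ = 2·(E^{n+1/2} − E^{n−1/2}) holds. In particular, if F^n = 0 for all n ≥ 1, then the discrete energy is conserved: E^{n+1/2} = E^{1/2} for all n ≥ 0. -/
open RealInnerProductSpace

variable {V : Type*} [NormedAddCommGroup V] [InnerProductSpace ℝ V]

/-- Discrete time derivative `D_τ u^{n+1/2} = (u^{n+1} − u^n)/τ`. -/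
noncomputable def Dtau (τ : ℝ) (u : ℕ → V) (n : ℕ) : V := τ⁻¹ • (u (n + 1) - u n)

/-- Midpoint average `u^{n+1/2} = (u^{n+1} + u^n)/2`. -/
noncomputable def uAvg (u : ℕ → V) (n : ℕ) : V := ((1 : ℝ) / 2) • (u (n + 1) + u n)

/-- Discrete energy `E^{n+1/2}` of the θ-scheme. -/
noncomputable def discreteEnergy (M A : V →ₗ[ℝ] V) (τ θ : ℝ) (u : ℕ → V) (n : ℕ) : ℝ :=
  (1 / 2) * (⟪M (Dtau τ u n), Dtau τ u n⟫ + ⟪A (uAvg u n), uAvg u n⟫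
    + τ ^ 2 * (θ - 1 / 4) * ⟪A (Dtau τ u n), Dtau τ u n⟫)

/-- `(u^n)` is a θ-scheme solution with forcing `(F^n)_{n≥1}`: for every `n ≥ 1`,
`M((u^{n+1} − 2u^n + u^{n−1})/τ²) + A(θu^{n+1} + (1−2θ)u^n + θu^{n−1}) = F^n`
(written here with shifted index `n+1` to avoid natural subtraction). -/
def IsThetaScheme (M A : V →ₗ[ℝ] V) (τ θ : ℝ) (u : ℕ → V) (F : ℕ → V) : Prop :=
  ∀ n : ℕ,
    M ((τ ^ 2)⁻¹ • (u (n + 2) - (2 : ℝ) • u (n + 1) + u n))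
      + A (θ • u (n + 2) + (1 - 2 * θ) • u (n + 1) + θ • u n) = F (n + 1)

/-- Discrete energy identity for the θ-scheme with self-adjoint `M` and `A`:
`⟪F^n, u^{n+1} − u^{n−1}⟫ = 2(E^{n+1/2} − E^{n−1/2})`; in particular for vanishing
forcing the discrete energy is conserved. -/
theorem theta_scheme_energy_identity
    [FiniteDimensional ℝ V] (M A : V →ₗ[ℝ] V)
    (hM : ∀ x y : V, ⟪M x, y⟫ = ⟪x, M y⟫) (hA : ∀ x y : V, ⟪A x, y⟫ = ⟪x, A y⟫)
    (τ θ : ℝ) (hτ : 0 < τ) (u F : ℕ → V)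
    (hscheme : IsThetaScheme M A τ θ u F) :
    (∀ n : ℕ, ⟪F (n + 1), u (n + 2) - u n⟫ =
      2 * (discreteEnergy M A τ θ u (n + 1) - discreteEnergy M A τ θ u n)) ∧
    ((∀ n : ℕ, F (n + 1) = 0) →
      ∀ n : ℕ, discreteEnergy M A τ θ u n = discreteEnergy M A τ θ u 0) := by
  have hMs : ∀ x y : V, ⟪M x, y⟫ = ⟪M y, x⟫ := fun x y => by
    rw [hM, real_inner_comm]
  have hAs : ∀ x y : V, ⟪A x, y⟫ = ⟪A y, x⟫ := fun x y => by
    rw [hA, real_inner_comm]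
  have hτ0 : τ ≠ 0 := ne_of_gt hτ
  have key : ∀ n : ℕ, ⟪F (n + 1), u (n + 2) - u n⟫ =
      2 * (discreteEnergy M A τ θ u (n + 1) - discreteEnergy M A τ θ u n) := by
    intro n
    have h := hscheme n
    rw [← h]
    simp only [discreteEnergy, Dtau, uAvg, map_add, map_sub, map_smul,
      inner_add_left, inner_sub_left, inner_sub_right, inner_add_right,
      real_inner_smul_left, real_inner_smul_right, smul_smul]
    rw [hMs (u n) (u (n+1)), hMs (u n) (u (n+2)), hMs (u (n+1)) (u (n+2)),
      hAs (u n) (u (n+1)), hAs (u n) (u (n+2)), hAs (u (n+1)) (u (n+2))]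
    field_simp
    ring
  refine ⟨key, fun hF n => ?_⟩
  induction n with
  | zero => rfl
  | succ k ih =>
      have := key k
      rw [hF k, inner_zero_left] at this
      linarith [this, ih]
end

section
/- Consider the θ-scheme setting below and assume additionally that M and A are positive semidefinite (⟪Mv,v⟫ ≥ 0 and ⟪Av,v⟫ ≥ 0 for all v ∈ V), that 0 ≤ θ < 1/4, and that for some δ ∈ (0,1) the CFL-type spectral condition τ²·(1/4 − θ)·⟪Av,v⟫ ≤ (1−δ)²·⟪Mv,v⟫ holds for all v ∈ V. Then for any sequence (u^n)_{n≥0} in V and every n ≥ 0, the discrete energy satisfies E^{n+1/2} ≥ (1/2)·[(1 − (1−δ)²)·⟪M D_τu^{n+1/2}, D_τu^{n+1/2}⟫ + ⟪A u^{n+1/2}, u^{n+1/2}⟫] ≥ 0. -/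
open RealInnerProductSpace

variable {V : Type*} [NormedAddCommGroup V] [InnerProductSpace ℝ V]

/-- Conditional stability of the θ-method for `0 ≤ θ < 1/4` under the CFL-type
spectral condition `τ²(1/4 − θ)⟪Av,v⟫ ≤ (1−δ)²⟪Mv,v⟫`: the discrete energy
dominates the nonnegative quantity
`(1/2)[(1 − (1−δ)²)⟪M D_τu, D_τu⟫ + ⟪A u^{n+1/2}, u^{n+1/2}⟫]`. -/
theorem theta_scheme_cfl_stability
    [FiniteDimensional ℝ V] (M A : V →ₗ[ℝ] V)
    (hM : ∀ x y : V, ⟪M x, y⟫ = ⟪x, M y⟫) (hA : ∀ x y : V, ⟪A x, y⟫ = ⟪x, A y⟫)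
    (hMpsd : ∀ v : V, 0 ≤ ⟪M v, v⟫) (hApsd : ∀ v : V, 0 ≤ ⟪A v, v⟫)
    (τ θ : ℝ) (hτ : 0 < τ) (hθ0 : 0 ≤ θ) (hθ : θ < 1 / 4)
    (δ : ℝ) (hδ0 : 0 < δ) (hδ1 : δ < 1)
    (hCFL : ∀ v : V, τ ^ 2 * (1 / 4 - θ) * ⟪A v, v⟫ ≤ (1 - δ) ^ 2 * ⟪M v, v⟫)
    (u : ℕ → V) :
    ∀ n : ℕ,
      (1 / 2) * ((1 - (1 - δ) ^ 2) * ⟪M (Dtau τ u n), Dtau τ u n⟫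
          + ⟪A (uAvg u n), uAvg u n⟫) ≤ discreteEnergy M A τ θ u n ∧
      0 ≤ (1 / 2) * ((1 - (1 - δ) ^ 2) * ⟪M (Dtau τ u n), Dtau τ u n⟫
          + ⟪A (uAvg u n), uAvg u n⟫) := by
  intro n
  have h := hCFL (Dtau τ u n)
  have h1 := hMpsd (Dtau τ u n)
  have h2 := hApsd (uAvg u n)
  have h3 := hApsd (Dtau τ u n)
  constructor
  · unfold discreteEnergy; nlinarith
  · have hd : (1 - δ) ^ 2 ≤ 1 := by nlinarith
    nlinarith [mul_nonneg (sub_nonneg.2 hd) h1]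
end

section
/- Consider the θ-scheme setting below. Assume θ ≥ 1/4, ⟪Av,v⟫ ≥ 0 for all v ∈ V, and that M satisfies the lower bound ⟪Mv,v⟫ ≥ m_min·‖v‖² for all v ∈ V with a constant m_min > 0. Let (u^n)_{n≥0} be a θ-scheme solution with forcing (F^n)_{n≥1}. Then every discrete energy E^{n+1/2} is nonnegative and for every n ≥ 0: √(E^{n+1/2}) ≤ √(E^{1/2}) + (τ/√(2·m_min))·Σ_{k=1}^{n} ‖F^k‖. -/
open RealInnerProductSpace

variable {V : Type*} [NormedAddCommGroup V] [InnerProductSpace ℝ V]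

theorem energy_diff_aux (M A : V →ₗ[ℝ] V)
    (hM : ∀ x y : V, ⟪M x, y⟫ = ⟪x, M y⟫) (hA : ∀ x y : V, ⟪A x, y⟫ = ⟪x, A y⟫)
    (τ θ : ℝ) (hτ : τ ≠ 0) (u F : ℕ → V) (hscheme : IsThetaScheme M A τ θ u F) (n : ℕ) :
    discreteEnergy M A τ θ u (n+1) - discreteEnergy M A τ θ u n
      = ⟪F (n+1), ((1:ℝ)/2) • (u (n+2) - u n)⟫ := by
  have h := hscheme n
  have h2 := congrArg (fun w => ⟪w, ((1:ℝ)/2) • (u (n+2) - u n)⟫) h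
  simp only [discreteEnergy, Dtau, uAvg] at *
  set a := u n
  set b := u (n+1)
  set c := u (n+2)
  have hMca : ⟪M c, a⟫ = ⟪M a, c⟫ := (hM c a).trans (real_inner_comm _ _)
  have hMcb : ⟪M c, b⟫ = ⟪M b, c⟫ := (hM c b).trans (real_inner_comm _ _)
  have hMba : ⟪M b, a⟫ = ⟪M a, b⟫ := (hM b a).trans (real_inner_comm _ _)
  have hAca : ⟪A c, a⟫ = ⟪A a, c⟫ := (hA c a).trans (real_inner_comm _ _)
  have hAcb : ⟪A c, b⟫ = ⟪A b, c⟫ := (hA c b).trans (real_inner_comm _ _)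
  have hAba : ⟪A b, a⟫ = ⟪A a, b⟫ := (hA b a).trans (real_inner_comm _ _)
  simp only [map_add, map_sub, map_smul, inner_add_left, inner_add_right, inner_sub_left,
    inner_sub_right, inner_smul_left, inner_smul_right, real_inner_smul_left,
    real_inner_smul_right, smul_eq_mul, RingHom.id_apply, conj_trivial] at h2 ⊢
  simp only [hMca, hMcb, hMba, hAca, hAcb, hAba] at h2 ⊢
  rw [← h2]
  field_simp
  ring

/-- Stability estimate for the θ-method with `θ ≥ 1/4`: for a θ-scheme solution
with positive semidefinite `A` and `M ≥ m_min > 0`, every discrete energy is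
nonnegative and `√E^{n+1/2} ≤ √E^{1/2} + (τ/√(2 m_min))·Σ_{k=1}^n ‖F^k‖`. -/
theorem theta_scheme_stability_estimate_unconditional
    [FiniteDimensional ℝ V] (M A : V →ₗ[ℝ] V)
    (hM : ∀ x y : V, ⟪M x, y⟫ = ⟪x, M y⟫) (hA : ∀ x y : V, ⟪A x, y⟫ = ⟪x, A y⟫)
    (hApsd : ∀ v : V, 0 ≤ ⟪A v, v⟫)
    (mmin : ℝ) (hmmin : 0 < mmin) (hMlow : ∀ v : V, mmin * ‖v‖ ^ 2 ≤ ⟪M v, v⟫)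
    (τ θ : ℝ) (hτ : 0 < τ) (hθ : 1 / 4 ≤ θ)
    (u F : ℕ → V) (hscheme : IsThetaScheme M A τ θ u F) :
    (∀ n : ℕ, 0 ≤ discreteEnergy M A τ θ u n) ∧
    ∀ n : ℕ, Real.sqrt (discreteEnergy M A τ θ u n) ≤
      Real.sqrt (discreteEnergy M A τ θ u 0)
        + (τ / Real.sqrt (2 * mmin)) * ∑ k ∈ Finset.Icc 1 n, ‖F k‖ := by
  set E : ℕ → ℝ := discreteEnergy M A τ θ u with hE
  set D : ℕ → V := Dtau τ u with hD
  -- lower bound on energy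
  have hlow : ∀ n, mmin * ‖D n‖ ^ 2 ≤ 2 * E n := by
    intro n
    have t1 := hMlow (D n)
    have t2 := hApsd (uAvg u n)
    have t3 : 0 ≤ τ ^ 2 * (θ - 1 / 4) * ⟪A (D n), D n⟫ :=
      mul_nonneg (mul_nonneg (sq_nonneg τ) (by linarith)) (hApsd _)
    simp only [hE, discreteEnergy, ← hD]
    nlinarith [sq_nonneg ‖D n‖]
  have hEnn : ∀ n, 0 ≤ E n := by
    intro n
    have := hlow n
    nlinarith [sq_nonneg ‖D n‖, mul_nonneg hmmin.le (sq_nonneg ‖D n‖)]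
  refine ⟨hEnn, ?_⟩
  set r : ℝ := Real.sqrt (2 * mmin) with hr
  have hrpos : 0 < r := Real.sqrt_pos.2 (by linarith)
  have hr2 : r ^ 2 = 2 * mmin := Real.sq_sqrt (by linarith)
  -- bound on discrete derivative
  have hkey : ∀ k, r * ‖D k‖ ≤ 2 * Real.sqrt (E k) := by
    intro k
    have h1 : (r * ‖D k‖) ^ 2 ≤ (2 * Real.sqrt (E k)) ^ 2 := by
      have hs : Real.sqrt (E k) ^ 2 = E k := Real.sq_sqrt (hEnn k)
      nlinarith [hlow k]
    have := Real.sqrt_le_sqrt h1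
    rwa [Real.sqrt_sq (by positivity), Real.sqrt_sq (by positivity)] at this
  -- one-step estimate
  have hstep : ∀ n, Real.sqrt (E (n+1)) ≤ Real.sqrt (E n) + (τ / r) * ‖F (n+1)‖ := by
    intro n
    set s1 := Real.sqrt (E (n+1)) with hs1
    set s0 := Real.sqrt (E n) with hs0
    have hs1nn : 0 ≤ s1 := Real.sqrt_nonneg _
    have hs0nn : 0 ≤ s0 := Real.sqrt_nonneg _
    have hcnn : 0 ≤ (τ / r) * ‖F (n+1)‖ := by positivity
    rcases le_or_gt s1 s0 with h | h
    · linarith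
    · have hS : 0 < s1 + s0 := by linarith
      have hsq1 : s1 ^ 2 = E (n+1) := Real.sq_sqrt (hEnn _)
      have hsq0 : s0 ^ 2 = E n := Real.sq_sqrt (hEnn _)
      have hdiff := energy_diff_aux M A hM hA τ θ hτ.ne' u F hscheme n
      -- bound the forcing term
      have hgsplit : ((1:ℝ)/2) • (u (n+2) - u n) = (τ/2) • (D (n+1) + D n) := by
        simp only [hD, Dtau, smul_add, smul_smul]
        rw [div_mul_eq_mul_div, mul_inv_cancel₀ hτ.ne']
        module
      have hib : ⟪F (n+1), ((1:ℝ)/2) • (u (n+2) - u n)⟫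
          ≤ ‖F (n+1)‖ * ((τ/2) * (‖D (n+1)‖ + ‖D n‖)) := by
        refine le_trans (real_inner_le_norm _ _) ?_
        rw [hgsplit]
        have : ‖(τ/2) • (D (n+1) + D n)‖ ≤ (τ/2) * (‖D (n+1)‖ + ‖D n‖) := by
          rw [norm_smul]
          have := norm_add_le (D (n+1)) (D n)
          have habs : ‖(τ/2 : ℝ)‖ = τ/2 := by
            rw [Real.norm_eq_abs, abs_of_pos (by positivity)]
          rw [habs]
          nlinarith
        exact mul_le_mul_of_nonneg_left this (norm_nonneg _)
      have hd1 := hkey (n+1)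
      have hd0 := hkey n
      rw [← hs1] at hd1
      rw [← hs0] at hd0
      have hFnn : 0 ≤ ‖F (n+1)‖ := norm_nonneg _
      have hEdiff : s1 ^ 2 - s0 ^ 2 ≤ ‖F (n+1)‖ * ((τ/2) * (‖D (n+1)‖ + ‖D n‖)) := by
        rw [hsq1, hsq0]
        have hdiff' : E (n+1) - E n = ⟪F (n+1), ((1:ℝ)/2) • (u (n+2) - u n)⟫ := hdiff
        linarith
      have hsum : r * (‖D (n+1)‖ + ‖D n‖) ≤ 2 * (s1 + s0) := by linarith
      have hstep1 := mul_le_mul_of_nonneg_left hEdiff hrpos.le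
      have hc2 : 0 ≤ ‖F (n+1)‖ * (τ/2) := by positivity
      have h3' := mul_le_mul_of_nonneg_left hsum hc2
      have h3 : r * (s1 - s0) * (s1 + s0) ≤ τ * ‖F (n+1)‖ * (s1 + s0) := by
        nlinarith [hstep1, h3']
      have h4 : r * (s1 - s0) ≤ τ * ‖F (n+1)‖ := le_of_mul_le_mul_right h3 hS
      have h5 : s1 - s0 ≤ τ * ‖F (n+1)‖ / r := by
        rw [le_div_iff₀ hrpos]; linarith
      have h6 : (τ / r) * ‖F (n+1)‖ = τ * ‖F (n+1)‖ / r := by ring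
      linarith
  -- telescoping
  intro n
  induction n with
  | zero => simp
  | succ n ih =>
    rw [Finset.sum_Icc_succ_top (Nat.succ_le_succ (Nat.zero_le n))]
    have := hstep n
    have hc : 0 ≤ τ / r := by positivity
    calc Real.sqrt (E (n+1)) ≤ Real.sqrt (E n) + (τ / r) * ‖F (n+1)‖ := hstep n
      _ ≤ Real.sqrt (E 0) + (τ / r) * ∑ k ∈ Finset.Icc 1 n, ‖F k‖ + (τ / r) * ‖F (n+1)‖ := by
          linarith
      _ = Real.sqrt (E 0) + (τ / r) * (∑ k ∈ Finset.Icc 1 n, ‖F k‖ + ‖F (n+1)‖) := by ring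
end

section
/- Consider the θ-scheme setting below. Assume 0 ≤ θ < 1/4, ⟪Av,v⟫ ≥ 0 for all v ∈ V, ⟪Mv,v⟫ ≥ m_min·‖v‖² for all v ∈ V with m_min > 0, and that for some δ ∈ (0,1) the CFL-type spectral condition τ²·(1/4 − θ)·⟪Av,v⟫ ≤ (1−δ)²·⟪Mv,v⟫ holds for all v ∈ V. Let (u^n)_{n≥0} be a θ-scheme solution with forcing (F^n)_{n≥1}, and set c_δ := m_min·(1 − (1−δ)²) > 0. Then every discrete energy E^{n+1/2} is nonnegative and for every n ≥ 0: √(E^{n+1/2}) ≤ √(E^{1/2}) + (τ/√(2·c_δ))·Σ_{k=1}^{n} ‖F^k‖. -/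
open RealInnerProductSpace

variable {V : Type*} [NormedAddCommGroup V] [InnerProductSpace ℝ V]

/-!
Pairing the scheme at step `n + 1` with `u^{n+2} − u^n` telescopes into the energy identity
`E^{n+3/2} − E^{n+1/2} = ½⟪F^{n+1}, u^{n+2} − u^n⟫`. The CFL condition absorbs the negative
`τ²(θ − 1/4)` term into the mass term, so `E^{k+1/2} ≥ (c_δ/2)‖D_τu^{k+1/2}‖²`. Since
`u^{n+2} − u^n = τ(D_τu^{n+3/2} + D_τu^{n+1/2})`, Cauchy–Schwarz bounds the energy increment
`s² − t²` (with `s, t` the square roots of consecutive energies) by `(τ/√(2c_δ))‖F^{n+1}‖(s + t)`;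
dividing by `s + t` gives a one-step bound on `√E`, which sums up.
-/

lemma le_add_of_sq_sub_sq_le_mul_add {s t c : ℝ} (ht : 0 ≤ t) (hc : 0 ≤ c)
    (h : s ^ 2 - t ^ 2 ≤ c * (s + t)) : s ≤ t + c := by
  nlinarith

lemma le_add_sum_Icc_of_le_add_succ {α : Type*} [AddCommMonoid α] [PartialOrder α]
    [IsOrderedAddMonoid α] {a b : ℕ → α} (h : ∀ n, a (n + 1) ≤ a n + b (n + 1)) (n : ℕ) :
    a n ≤ a 0 + ∑ k ∈ Finset.Icc 1 n, b k := by
  induction n with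
  | zero => simp
  | succ n ih =>
    rw [Finset.sum_Icc_succ_top (Nat.le_add_left 1 n), ← add_assoc]
    exact (h n).trans (add_le_add_left ih _)

section ThetaScheme

variable {M A : V →ₗ[ℝ] V} {τ θ : ℝ} {u F : ℕ → V}

lemma sub_eq_smul_Dtau_add_Dtau (hτ : τ ≠ 0) (n : ℕ) :
    u (n + 2) - u n = τ • (Dtau τ u (n + 1) + Dtau τ u n) := by
  simp only [Dtau, smul_add, smul_smul, mul_inv_cancel₀ hτ, one_smul]
  abel

lemma discreteEnergy_succ_sub (hM : ∀ x y : V, ⟪M x, y⟫ = ⟪x, M y⟫)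
    (hA : ∀ x y : V, ⟪A x, y⟫ = ⟪x, A y⟫) (hτ : τ ≠ 0) (hs : IsThetaScheme M A τ θ u F)
    (n : ℕ) :
    discreteEnergy M A τ θ u (n + 1) - discreteEnergy M A τ θ u n
      = 1 / 2 * ⟪F (n + 1), u (n + 2) - u n⟫ := by
  have hM' : ∀ x y : V, ⟪M x, y⟫ = ⟪M y, x⟫ := fun x y => (hM x y).trans (real_inner_comm _ _)
  have hA' : ∀ x y : V, ⟪A x, y⟫ = ⟪A y, x⟫ := fun x y => (hA x y).trans (real_inner_comm _ _)
  have h := congrArg (fun w : V => ⟪w, u (n + 2) - u n⟫) (hs n)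
  simp only [inner_add_left, map_smul, map_add, map_sub, real_inner_smul_left,
    inner_sub_left, inner_sub_right] at h
  simp only [discreteEnergy, Dtau, uAvg, map_smul, map_add, map_sub, real_inner_smul_left,
    real_inner_smul_right, inner_add_left, inner_add_right, inner_sub_left, inner_sub_right]
  simp only [hM' (u (n + 1)) (u (n + 2)), hM' (u n) (u (n + 2)), hM' (u n) (u (n + 1)),
    hA' (u (n + 1)) (u (n + 2)), hA' (u n) (u (n + 2)), hA' (u n) (u (n + 1))] at h ⊢
  field_simp at h ⊢
  linear_combination 16 * h

lemma inner_M_Dtau_le_discreteEnergy {ρ : ℝ} (hApsd : ∀ v : V, 0 ≤ ⟪A v, v⟫)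
    (hCFL : ∀ v : V, τ ^ 2 * (1 / 4 - θ) * ⟪A v, v⟫ ≤ ρ * ⟪M v, v⟫) (n : ℕ) :
    (1 - ρ) / 2 * ⟪M (Dtau τ u n), Dtau τ u n⟫ ≤ discreteEnergy M A τ θ u n := by
  have hAvg := hApsd (uAvg u n)
  have hD := hCFL (Dtau τ u n)
  rw [discreteEnergy]
  linarith

lemma sqrt_discreteEnergy_succ_le (hM : ∀ x y : V, ⟪M x, y⟫ = ⟪x, M y⟫)
    (hA : ∀ x y : V, ⟪A x, y⟫ = ⟪x, A y⟫) (hτ : 0 < τ) (hs : IsThetaScheme M A τ θ u F)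
    {c : ℝ} (hc : 0 < c) (hcoer : ∀ k, c / 2 * ‖Dtau τ u k‖ ^ 2 ≤ discreteEnergy M A τ θ u k)
    (n : ℕ) :
    √(discreteEnergy M A τ θ u (n + 1))
      ≤ √(discreteEnergy M A τ θ u n) + τ / √(2 * c) * ‖F (n + 1)‖ := by
  set E := discreteEnergy M A τ θ u
  have hE : ∀ k, 0 ≤ E k := fun k => (hcoer k).trans' (by positivity)
  have hD : ∀ k, √(2 * c) * ‖Dtau τ u k‖ ≤ 2 * √(E k) := fun k => by
    rw [← pow_le_pow_iff_left₀ (by positivity) (by positivity) two_ne_zero, mul_pow, mul_pow,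
      Real.sq_sqrt (by positivity), Real.sq_sqrt (hE k)]
    linarith [hcoer k]
  have hincr : √(2 * c) * (E (n + 1) - E n)
      ≤ τ * ‖F (n + 1)‖ * (√(E (n + 1)) + √(E n)) := by
    rw [discreteEnergy_succ_sub hM hA hτ.ne' hs, sub_eq_smul_Dtau_add_Dtau hτ.ne']
    have hCS : ⟪F (n + 1), τ • (Dtau τ u (n + 1) + Dtau τ u n)⟫
        ≤ τ * ‖F (n + 1)‖ * (‖Dtau τ u (n + 1)‖ + ‖Dtau τ u n‖) := by
      refine (real_inner_le_norm _ _).trans ?_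
      rw [norm_smul, Real.norm_of_nonneg hτ.le, mul_left_comm, ← mul_assoc]
      gcongr
      exact norm_add_le _ _
    have hFτ : 0 ≤ τ * ‖F (n + 1)‖ := by positivity
    nlinarith [hD (n + 1), hD n, Real.sqrt_nonneg (2 * c)]
  have hroot : 0 < √(2 * c) := Real.sqrt_pos.mpr (by positivity)
  refine le_add_of_sq_sub_sq_le_mul_add (Real.sqrt_nonneg _) (by positivity) ?_
  rw [Real.sq_sqrt (hE _), Real.sq_sqrt (hE _), div_mul_eq_mul_div, div_mul_eq_mul_div,
    le_div_iff₀ hroot]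
  linarith

end ThetaScheme

theorem theta_scheme_stability_estimate_cfl_general
    (M A : V →ₗ[ℝ] V)
    (hM : ∀ x y : V, ⟪M x, y⟫ = ⟪x, M y⟫) (hA : ∀ x y : V, ⟪A x, y⟫ = ⟪x, A y⟫)
    (hApsd : ∀ v : V, 0 ≤ ⟪A v, v⟫)
    (mmin : ℝ) (hmmin : 0 < mmin) (hMlow : ∀ v : V, mmin * ‖v‖ ^ 2 ≤ ⟪M v, v⟫)
    (τ θ : ℝ) (hτ : 0 < τ)
    (δ : ℝ) (hδ0 : 0 < δ) (hδ1 : δ < 1)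
    (hCFL : ∀ v : V, τ ^ 2 * (1 / 4 - θ) * ⟪A v, v⟫ ≤ (1 - δ) ^ 2 * ⟪M v, v⟫)
    (u F : ℕ → V) (hscheme : IsThetaScheme M A τ θ u F)
    (cδ : ℝ) (hcδ : cδ = mmin * (1 - (1 - δ) ^ 2)) :
    0 < cδ ∧
    (∀ n : ℕ, 0 ≤ discreteEnergy M A τ θ u n) ∧
    ∀ n : ℕ, Real.sqrt (discreteEnergy M A τ θ u n) ≤
      Real.sqrt (discreteEnergy M A τ θ u 0)
        + (τ / Real.sqrt (2 * cδ)) * ∑ k ∈ Finset.Icc 1 n, ‖F k‖ := by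
  have hρ : 0 < 1 - (1 - δ) ^ 2 := by nlinarith
  have hc : 0 < cδ := hcδ ▸ mul_pos hmmin hρ
  have hcoer : ∀ n, cδ / 2 * ‖Dtau τ u n‖ ^ 2 ≤ discreteEnergy M A τ θ u n := fun n => by
    have hEM := inner_M_Dtau_le_discreteEnergy hApsd hCFL n (u := u)
    have hMD := mul_le_mul_of_nonneg_left (hMlow (Dtau τ u n)) hρ.le
    rw [hcδ]
    linarith
  refine ⟨hc, fun n => (hcoer n).trans' (by positivity), fun n => ?_⟩
  rw [Finset.mul_sum]
  exact le_add_sum_Icc_of_le_add_succ (a := fun n => √(discreteEnergy M A τ θ u n))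
    (b := fun k => τ / √(2 * cδ) * ‖F k‖)
    (sqrt_discreteEnergy_succ_le hM hA hτ hscheme hc hcoer) n

/-- Stability estimate for the θ-method with `0 ≤ θ < 1/4` under the CFL-type
spectral condition: with `c_δ = m_min(1 − (1−δ)²)`, every discrete energy is
nonnegative and `√E^{n+1/2} ≤ √E^{1/2} + (τ/√(2 c_δ))·Σ_{k=1}^n ‖F^k‖`. -/
theorem theta_scheme_stability_estimate_cfl
    [FiniteDimensional ℝ V] (M A : V →ₗ[ℝ] V)
    (hM : ∀ x y : V, ⟪M x, y⟫ = ⟪x, M y⟫) (hA : ∀ x y : V, ⟪A x, y⟫ = ⟪x, A y⟫)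
    (hApsd : ∀ v : V, 0 ≤ ⟪A v, v⟫)
    (mmin : ℝ) (hmmin : 0 < mmin) (hMlow : ∀ v : V, mmin * ‖v‖ ^ 2 ≤ ⟪M v, v⟫)
    (τ θ : ℝ) (hτ : 0 < τ) (hθ0 : 0 ≤ θ) (hθ : θ < 1 / 4)
    (δ : ℝ) (hδ0 : 0 < δ) (hδ1 : δ < 1)
    (hCFL : ∀ v : V, τ ^ 2 * (1 / 4 - θ) * ⟪A v, v⟫ ≤ (1 - δ) ^ 2 * ⟪M v, v⟫)
    (u F : ℕ → V) (hscheme : IsThetaScheme M A τ θ u F)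
    (cδ : ℝ) (hcδ : cδ = mmin * (1 - (1 - δ) ^ 2)) :
    0 < cδ ∧
    (∀ n : ℕ, 0 ≤ discreteEnergy M A τ θ u n) ∧
    ∀ n : ℕ, Real.sqrt (discreteEnergy M A τ θ u n) ≤
      Real.sqrt (discreteEnergy M A τ θ u 0)
        + (τ / Real.sqrt (2 * cδ)) * ∑ k ∈ Finset.Icc 1 n, ‖F k‖ :=
  theta_scheme_stability_estimate_cfl_general M A hM hA hApsd mmin hmmin hMlow τ θ hτ δ hδ0 hδ1 hCFL
    u F hscheme cδ hcδ
end

section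
/- Let E be a nontrivial finite-dimensional real inner product space and A : E → E a self-adjoint linear operator satisfying μ·‖v‖² ≤ ⟪Av,v⟫ ≤ L·‖v‖² for all v ∈ E, with constants 0 < μ ≤ L, and set κ := L/μ. Then A is bijective, and for every b ∈ E, every initial guess x₀ ∈ E, and every ℓ ∈ ℕ, writing x* := A⁻¹b and r₀ := b − A x₀, there exists y in the affine Krylov space x₀ + span{A^j r₀ : 0 ≤ j < ℓ} such that ⟪A(x* − y), x* − y⟫ ≤ 4·((√κ − 1)/(√κ + 1))^{2ℓ} · ⟪A(x* − x₀), x* − x₀⟫. In particular, the ℓ-th conjugate gradient iterate, being the minimizer of the A-norm error over this affine Krylov space, satisfies the error bound ‖x* − x^{(ℓ)}‖_A ≤ 2·((√κ − 1)/(√κ + 1))^ℓ·‖x* − x₀‖_A. -/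
/-!
If `p` is a real polynomial with `p 0 = 1` and degree at most `ℓ`, write `p = 1 + X q`; then
`y = x₀ - q(A) r₀` lies in the affine Krylov space and `x* - y = p(A) (x* - x₀)`. Expanding in an
orthonormal eigenbasis of `A`, whose eigenvalues lie in `[μ, L]`, the energy norm of `p(A) e` is at
most `max_{[μ, L]} |p|` times that of `e`. For the rescaled Chebyshev polynomial
`p t = T_ℓ((L + μ - 2t)/(L - μ)) / T_ℓ((L + μ)/(L - μ))` this maximum is `1 / T_ℓ((L + μ)/(L - μ))`,
and `(L + μ)/(L - μ) = (σ + σ⁻¹)/2` with `σ = (√κ - 1)/(√κ + 1)`, where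
`T_ℓ((σ + σ⁻¹)/2) = (σ^ℓ + σ^(-ℓ))/2 ≥ σ^(-ℓ)/2`.
-/

open Polynomial RealInnerProductSpace

namespace LinearMap.IsSymmetric

variable {E : Type*} [NormedAddCommGroup E] [InnerProductSpace ℝ E] [FiniteDimensional ℝ E]
  {T : E →ₗ[ℝ] E} {n : ℕ}

theorem eigenvectorBasis_repr_aeval_apply (hT : T.IsSymmetric) (hn : Module.finrank ℝ E = n)
    (p : ℝ[X]) (v : E) (i : Fin n) :
    (hT.eigenvectorBasis hn).repr (aeval T p v) i =
      p.eval (hT.eigenvalues hn i) * (hT.eigenvectorBasis hn).repr v i := by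
  induction p using Polynomial.induction_on generalizing v with
  | C a => simp
  | add p q hp hq => simp [hp, hq, add_mul]
  | monomial k a ih =>
    rw [pow_succ, ← mul_assoc, map_mul, Module.End.mul_apply, aeval_X, ih,
      eigenvectorBasis_apply_self_apply]
    simp only [eval_mul, eval_X, RCLike.ofReal_real_eq_id, id_eq]
    ring

theorem inner_apply_self_eq_sum_eigenvalues (hT : T.IsSymmetric) (hn : Module.finrank ℝ E = n)
    (v : E) :
    ⟪T v, v⟫ = ∑ i, hT.eigenvalues hn i * (hT.eigenvectorBasis hn).repr v i ^ 2 := by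
  rw [← (hT.eigenvectorBasis hn).sum_inner_mul_inner]
  refine Finset.sum_congr rfl fun i _ => ?_
  rw [real_inner_comm, ← OrthonormalBasis.repr_apply_apply, ← OrthonormalBasis.repr_apply_apply,
    eigenvectorBasis_apply_self_apply]
  simp only [RCLike.ofReal_real_eq_id, id_eq]
  ring

theorem eigenvalues_mem_Icc (hT : T.IsSymmetric) (hn : Module.finrank ℝ E = n) {μ L : ℝ}
    (hlow : ∀ v, μ * ‖v‖ ^ 2 ≤ ⟪T v, v⟫) (hup : ∀ v, ⟪T v, v⟫ ≤ L * ‖v‖ ^ 2) (i : Fin n) :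
    hT.eigenvalues hn i ∈ Set.Icc μ L := by
  have hquot :
      ⟪T (hT.eigenvectorBasis hn i), hT.eigenvectorBasis hn i⟫ = hT.eigenvalues hn i := by
    rw [apply_eigenvectorBasis, real_inner_smul_left, real_inner_self_eq_norm_sq,
      (hT.eigenvectorBasis hn).orthonormal.1 i]
    simp
  have h1 := hlow (hT.eigenvectorBasis hn i)
  have h2 := hup (hT.eigenvectorBasis hn i)
  rw [hquot, (hT.eigenvectorBasis hn).orthonormal.1 i] at h1 h2
  constructor <;> linarith

theorem inner_aeval_apply_le (hT : T.IsSymmetric) {μ L c : ℝ} (hμ : 0 ≤ μ)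
    (hlow : ∀ v, μ * ‖v‖ ^ 2 ≤ ⟪T v, v⟫) (hup : ∀ v, ⟪T v, v⟫ ≤ L * ‖v‖ ^ 2)
    (p : ℝ[X]) (hp : ∀ t ∈ Set.Icc μ L, |p.eval t| ≤ c) (v : E) :
    ⟪T (aeval T p v), aeval T p v⟫ ≤ c ^ 2 * ⟪T v, v⟫ := by
  rw [hT.inner_apply_self_eq_sum_eigenvalues rfl, hT.inner_apply_self_eq_sum_eigenvalues rfl,
    Finset.mul_sum]
  refine Finset.sum_le_sum fun i _ => ?_
  have hev := hT.eigenvalues_mem_Icc rfl hlow hup i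
  have hpc : p.eval (hT.eigenvalues rfl i) ^ 2 ≤ c ^ 2 :=
    sq_le_sq.2 ((hp _ hev).trans (le_abs_self c))
  rw [eigenvectorBasis_repr_aeval_apply]
  have := mul_le_mul_of_nonneg_right hpc
    (mul_nonneg (hμ.trans hev.1) (sq_nonneg ((hT.eigenvectorBasis rfl).repr v i)))
  linear_combination this

end LinearMap.IsSymmetric

section Krylov

variable {R M : Type*} [CommRing R] [AddCommGroup M] [Module R M]

def krylovSubspace (A : Module.End R M) (r : M) (ℓ : ℕ) : Submodule R M :=
  Submodule.span R {w | ∃ j < ℓ, w = (A ^ j) r}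

theorem aeval_apply_mem_krylovSubspace (A : Module.End R M) (r : M) {ℓ : ℕ} {q : R[X]}
    (hq : q.degree < ℓ) : aeval A q r ∈ krylovSubspace A r ℓ := by
  rcases eq_or_ne q 0 with rfl | hq0
  · simp
  rw [aeval_eq_sum_range' ((natDegree_lt_iff_degree_lt hq0).2 hq), LinearMap.coe_sum,
    Finset.sum_apply]
  refine Submodule.sum_mem _ fun j hj => ?_
  exact Submodule.smul_mem _ _ (Submodule.subset_span ⟨j, Finset.mem_range.1 hj, rfl⟩)

theorem exists_mem_krylovSubspace_sub_add_eq_aeval (A : Module.End R M) (x₀ x : M) {ℓ : ℕ}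
    {p : R[X]} (hp0 : p.eval 0 = 1) (hp : p.natDegree ≤ ℓ) :
    ∃ z ∈ krylovSubspace A (A (x - x₀)) ℓ, x - (x₀ + z) = aeval A p (x - x₀) := by
  have hdeg : (-p.divX).degree < ℓ := by
    rw [degree_neg]
    rcases eq_or_ne p 0 with rfl | hp_ne
    · simp
    exact (degree_divX_lt hp_ne).trans_le (degree_le_natDegree.trans (by exact_mod_cast hp))
  refine ⟨_, aeval_apply_mem_krylovSubspace A _ hdeg, ?_⟩
  conv_rhs => rw [← divX_mul_X_add p, coeff_zero_eq_eval_zero, hp0]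
  simp only [map_neg, map_add, map_mul, aeval_X, map_one, LinearMap.neg_apply,
    LinearMap.add_apply, Module.End.mul_apply, Module.End.one_apply]
  abel

end Krylov

namespace Polynomial.Chebyshev

theorem T_real_eval_half_add_inv {a : ℝ} (ha : 0 < a) (n : ℕ) :
    (T ℝ n).eval ((a + a⁻¹) / 2) = (a ^ n + (a ^ n)⁻¹) / 2 := by
  have h := T_real_cosh (Real.log a) n
  rw [Real.cosh_eq, Real.cosh_eq, Real.exp_log ha, Real.exp_neg, Real.exp_log ha] at h
  rw [h, Int.cast_natCast, Real.exp_neg, Real.exp_nat_mul, Real.exp_log ha]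

end Polynomial.Chebyshev

open Polynomial.Chebyshev

noncomputable def chebyshevResidual (μ L : ℝ) (ℓ : ℕ) : ℝ[X] :=
  C ((T ℝ ℓ).eval ((L + μ) / (L - μ)))⁻¹ * (T ℝ ℓ).comp (C (L - μ)⁻¹ * (C (L + μ) - 2 * X))

section chebyshevResidual

variable {μ L : ℝ}

theorem eval_chebyshevResidual (ℓ : ℕ) (t : ℝ) :
    (chebyshevResidual μ L ℓ).eval t =
      ((T ℝ ℓ).eval ((L + μ) / (L - μ)))⁻¹ * (T ℝ ℓ).eval ((L + μ - 2 * t) / (L - μ)) := by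
  simp [chebyshevResidual, eval_comp, div_eq_inv_mul]

theorem natDegree_chebyshevResidual_le (ℓ : ℕ) : (chebyshevResidual μ L ℓ).natDegree ≤ ℓ := by
  have hm : (C (L - μ)⁻¹ * (C (L + μ) - 2 * X)).natDegree ≤ 1 := by compute_degree
  refine (natDegree_C_mul_le _ _).trans (natDegree_comp_le.trans ?_)
  rw [natDegree_T, Int.natAbs_natCast]
  simpa using Nat.mul_le_mul_left ℓ hm

theorem one_le_eval_T_add_div_sub (hμ : 0 ≤ μ) (hμL : μ < L) (ℓ : ℕ) :
    1 ≤ (T ℝ ℓ).eval ((L + μ) / (L - μ)) :=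
  one_le_eval_T_real _ ((one_le_div (by linarith)).2 (by linarith))

theorem chebyshevResidual_eval_zero (hμ : 0 ≤ μ) (hμL : μ < L) (ℓ : ℕ) :
    (chebyshevResidual μ L ℓ).eval 0 = 1 := by
  rw [eval_chebyshevResidual, mul_zero, sub_zero]
  exact inv_mul_cancel₀ (one_le_eval_T_add_div_sub hμ hμL ℓ |>.trans_lt' one_pos).ne'

theorem abs_eval_chebyshevResidual_le (hμ : 0 < μ) (hμL : μ < L) (ℓ : ℕ) {t : ℝ}
    (ht : t ∈ Set.Icc μ L) :
    |(chebyshevResidual μ L ℓ).eval t| ≤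
      2 * ((√(L / μ) - 1) / (√(L / μ) + 1)) ^ ℓ := by
  set s := √(L / μ)
  set σ := (s - 1) / (s + 1)
  have hs : 1 < s := Real.lt_sqrt_of_sq_lt (by rw [one_pow, one_lt_div hμ]; exact hμL)
  have hσ : 0 < σ := div_pos (by linarith) (by linarith)
  have hL : L = s ^ 2 * μ := by
    rw [Real.sq_sqrt (div_pos (hμ.trans hμL) hμ).le, div_mul_cancel₀ _ hμ.ne']
  have hcenter : (L + μ) / (L - μ) = (σ⁻¹ + σ⁻¹⁻¹) / 2 := by
    rw [inv_inv, hL]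
    simp only [σ]
    have : s - 1 ≠ 0 := by linarith
    have : s ^ 2 - 1 ≠ 0 := by nlinarith
    field_simp
    ring
  have hT : 1 ≤ 2 * σ ^ ℓ * (T ℝ ℓ).eval ((L + μ) / (L - μ)) := by
    rw [hcenter, T_real_eval_half_add_inv (inv_pos.2 hσ), inv_pow, inv_inv]
    field_simp
    nlinarith [pow_pos hσ ℓ]
  have hm : |(L + μ - 2 * t) / (L - μ)| ≤ 1 := by
    rw [abs_div, abs_of_pos (by linarith : 0 < L - μ), div_le_one (by linarith), abs_le]
    constructor <;> linarith [ht.1, ht.2]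
  have hT0 := (one_le_eval_T_add_div_sub hμ.le hμL ℓ).trans_lt' one_pos
  rw [eval_chebyshevResidual, abs_mul, abs_inv, abs_of_pos hT0]
  calc _ ≤ ((T ℝ ℓ).eval ((L + μ) / (L - μ)))⁻¹ * 1 :=
        mul_le_mul_of_nonneg_left (abs_eval_T_real_le_one _ hm) (inv_nonneg.2 hT0.le)
    _ ≤ 2 * σ ^ ℓ := by rwa [mul_one, inv_le_iff_one_le_mul₀ hT0]

end chebyshevResidual

theorem exists_eval_zero_eq_one_abs_eval_le {μ L : ℝ} (hμ : 0 < μ) (hμL : μ ≤ L) (ℓ : ℕ) :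
    ∃ p : ℝ[X], p.eval 0 = 1 ∧ p.natDegree ≤ ℓ ∧
      ∀ t ∈ Set.Icc μ L, |p.eval t| ≤ 2 * ((√(L / μ) - 1) / (√(L / μ) + 1)) ^ ℓ := by
  rcases hμL.lt_or_eq with hlt | rfl
  · exact ⟨_, chebyshevResidual_eval_zero hμ.le hlt ℓ, natDegree_chebyshevResidual_le ℓ,
      fun t ht => abs_eval_chebyshevResidual_le hμ hlt ℓ ht⟩
  refine ⟨(1 - C μ⁻¹ * X) ^ ℓ, by simp, by compute_degree, fun t ht => ?_⟩
  obtain rfl : t = μ := le_antisymm ht.2 ht.1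
  simpa [hμ.ne'] using le_mul_of_one_le_left (pow_nonneg le_rfl ℓ) one_le_two

theorem LinearMap.bijective_of_coercive {E : Type*} [NormedAddCommGroup E]
    [InnerProductSpace ℝ E] [FiniteDimensional ℝ E] {A : E →ₗ[ℝ] E} {μ : ℝ} (hμ : 0 < μ)
    (hlow : ∀ v, μ * ‖v‖ ^ 2 ≤ ⟪A v, v⟫) : Function.Bijective A := by
  have hinj : Function.Injective A := by
    rw [← LinearMap.ker_eq_bot, LinearMap.ker_eq_bot']
    intro v hv
    have h := hlow v
    rw [hv, inner_zero_left] at h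
    exact norm_eq_zero.1 (pow_eq_zero_iff two_ne_zero |>.1
      (le_antisymm (nonpos_of_mul_nonpos_right h hμ) (sq_nonneg _)))
  exact ⟨hinj, LinearMap.injective_iff_surjective.1 hinj⟩

theorem conjugate_gradient_convergence_general
    {E : Type*} [NormedAddCommGroup E] [InnerProductSpace ℝ E]
    [FiniteDimensional ℝ E]
    (A : E →ₗ[ℝ] E) (hA : ∀ x y : E, ⟪A x, y⟫ = ⟪x, A y⟫)
    (μ L : ℝ) (hμ : 0 < μ) (hμL : μ ≤ L)
    (hlow : ∀ v : E, μ * ‖v‖ ^ 2 ≤ ⟪A v, v⟫)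
    (hup : ∀ v : E, ⟪A v, v⟫ ≤ L * ‖v‖ ^ 2)
    (κ : ℝ) (hκ : κ = L / μ) :
    Function.Bijective A ∧
    ∀ (b x₀ : E) (ℓ : ℕ) (xstar : E), A xstar = b →
      (∃ y : E,
        (∃ z ∈ Submodule.span ℝ {w : E | ∃ j < ℓ, w = (A ^ j) (b - A x₀)}, y = x₀ + z) ∧
        ⟪A (xstar - y), xstar - y⟫ ≤
          4 * ((Real.sqrt κ - 1) / (Real.sqrt κ + 1)) ^ (2 * ℓ) *
            ⟪A (xstar - x₀), xstar - x₀⟫) ∧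
      ∀ xl : E,
        (∃ z ∈ Submodule.span ℝ {w : E | ∃ j < ℓ, w = (A ^ j) (b - A x₀)}, xl = x₀ + z) →
        (∀ y : E,
          (∃ z ∈ Submodule.span ℝ {w : E | ∃ j < ℓ, w = (A ^ j) (b - A x₀)}, y = x₀ + z) →
          ⟪A (xstar - xl), xstar - xl⟫ ≤ ⟪A (xstar - y), xstar - y⟫) →
        Real.sqrt ⟪A (xstar - xl), xstar - xl⟫ ≤
          2 * ((Real.sqrt κ - 1) / (Real.sqrt κ + 1)) ^ ℓ *
            Real.sqrt ⟪A (xstar - x₀), xstar - x₀⟫ := by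
  refine ⟨LinearMap.bijective_of_coercive hμ hlow, fun b x₀ ℓ xstar hb => ?_⟩
  subst hκ hb
  set σ := (√(L / μ) - 1) / (√(L / μ) + 1)
  have hbest : ∃ y, (∃ z ∈ krylovSubspace A (A xstar - A x₀) ℓ, y = x₀ + z) ∧
      ⟪A (xstar - y), xstar - y⟫ ≤ (2 * σ ^ ℓ) ^ 2 * ⟪A (xstar - x₀), xstar - x₀⟫ := by
    obtain ⟨p, hp0, hpℓ, hp⟩ := exists_eval_zero_eq_one_abs_eval_le hμ hμL ℓ
    obtain ⟨z, hz, hzp⟩ := exists_mem_krylovSubspace_sub_add_eq_aeval A x₀ xstar hp0 hpℓ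
    refine ⟨x₀ + z, ⟨z, by rwa [map_sub] at hz, rfl⟩, ?_⟩
    rw [hzp]
    exact LinearMap.IsSymmetric.inner_aeval_apply_le hA hμ.le hlow hup p hp _
  obtain ⟨y, hy, hyerr⟩ := hbest
  have hσ : 0 ≤ σ := div_nonneg (sub_nonneg.2 (Real.one_le_sqrt.2 ((one_le_div hμ).2 hμL)))
    (by positivity)
  have hrate : (2 * σ ^ ℓ) ^ 2 = 4 * σ ^ (2 * ℓ) := by ring
  refine ⟨⟨y, hy, hrate ▸ hyerr⟩, fun xl _ hmin => ?_⟩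
  calc √⟪A (xstar - xl), xstar - xl⟫
      ≤ √((2 * σ ^ ℓ) ^ 2 * ⟪A (xstar - x₀), xstar - x₀⟫) :=
        Real.sqrt_le_sqrt ((hmin y hy).trans hyerr)
    _ = 2 * σ ^ ℓ * √⟪A (xstar - x₀), xstar - x₀⟫ := by
        rw [Real.sqrt_mul (sq_nonneg _), Real.sqrt_sq (mul_nonneg zero_le_two (pow_nonneg hσ ℓ))]

/-- Classical convergence bound for the conjugate gradient method: for a
self-adjoint operator `A` with `μ‖v‖² ≤ ⟪Av,v⟫ ≤ L‖v‖²` (condition number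
`κ = L/μ`), `A` is bijective; some element `y` of the affine Krylov space
`x₀ + span{Aʲr₀ : j < ℓ}` satisfies
`⟪A(x*−y), x*−y⟫ ≤ 4((√κ−1)/(√κ+1))^{2ℓ}⟪A(x*−x₀), x*−x₀⟫`, and hence the ℓ-th
CG iterate (the A-norm minimizer over that space) satisfies
`‖x*−x^{(ℓ)}‖_A ≤ 2((√κ−1)/(√κ+1))^ℓ ‖x*−x₀‖_A`. -/
theorem conjugate_gradient_convergence
    {E : Type*} [NormedAddCommGroup E] [InnerProductSpace ℝ E]
    [FiniteDimensional ℝ E] [Nontrivial E]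
    (A : E →ₗ[ℝ] E) (hA : ∀ x y : E, ⟪A x, y⟫ = ⟪x, A y⟫)
    (μ L : ℝ) (hμ : 0 < μ) (hμL : μ ≤ L)
    (hlow : ∀ v : E, μ * ‖v‖ ^ 2 ≤ ⟪A v, v⟫)
    (hup : ∀ v : E, ⟪A v, v⟫ ≤ L * ‖v‖ ^ 2)
    (κ : ℝ) (hκ : κ = L / μ) :
    Function.Bijective A ∧
    ∀ (b x₀ : E) (ℓ : ℕ) (xstar : E), A xstar = b →
      (∃ y : E,
        (∃ z ∈ Submodule.span ℝ {w : E | ∃ j < ℓ, w = (A ^ j) (b - A x₀)}, y = x₀ + z) ∧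
        ⟪A (xstar - y), xstar - y⟫ ≤
          4 * ((Real.sqrt κ - 1) / (Real.sqrt κ + 1)) ^ (2 * ℓ) *
            ⟪A (xstar - x₀), xstar - x₀⟫) ∧
      ∀ xl : E,
        (∃ z ∈ Submodule.span ℝ {w : E | ∃ j < ℓ, w = (A ^ j) (b - A x₀)}, xl = x₀ + z) →
        (∀ y : E,
          (∃ z ∈ Submodule.span ℝ {w : E | ∃ j < ℓ, w = (A ^ j) (b - A x₀)}, y = x₀ + z) →
          ⟪A (xstar - xl), xstar - xl⟫ ≤ ⟪A (xstar - y), xstar - y⟫) →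
        Real.sqrt ⟪A (xstar - xl), xstar - xl⟫ ≤
          2 * ((Real.sqrt κ - 1) / (Real.sqrt κ + 1)) ^ ℓ *
            Real.sqrt ⟪A (xstar - x₀), xstar - x₀⟫ :=
  conjugate_gradient_convergence_general A hA μ L hμ hμL hlow hup κ hκ
end

section
/- Let H be a real Hilbert space, let V₀, V₁, …, V_m be closed subspaces of H, let P_i : H → H denote the orthogonal projection onto V_i, and suppose there is a constant C₀ > 0 such that every v ∈ H admits a decomposition v = Σ_{i=0}^m v_i with v_i ∈ V_i and Σ_{i=0}^m ‖v_i‖² ≤ C₀²·‖v‖² (a stable subspace decomposition). Then the additive Schwarz operator P := Σ_{i=0}^m P_i satisfies ⟪P v, v⟫ ≥ C₀^{-2}·‖v‖² for all v ∈ H. -/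
open RealInnerProductSpace

/-- Lower spectral bound for the additive Schwarz operator: if every `v` admits a
stable decomposition `v = Σ v_i`, `v_i ∈ V_i`, with `Σ‖v_i‖² ≤ C₀²‖v‖²`, then the
sum `P = Σ P_i` of the orthogonal projections onto the closed subspaces `V_i`
satisfies `⟪Pv, v⟫ ≥ C₀⁻²‖v‖²`. -/
theorem additive_schwarz_lower_bound
    {H : Type*} [NormedAddCommGroup H] [InnerProductSpace ℝ H] [CompleteSpace H]
    (m : ℕ) (V : Fin (m + 1) → Submodule ℝ H)
    (hVclosed : ∀ i, IsClosed ((V i : Set H)))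
    (P : Fin (m + 1) → H →ₗ[ℝ] H)
    (hPmem : ∀ i (v : H), P i v ∈ V i)
    (hPproj : ∀ i (v : H), ∀ w ∈ V i, ⟪P i v, w⟫ = ⟪v, w⟫)
    (C0 : ℝ) (hC0 : 0 < C0)
    (hstable : ∀ v : H, ∃ d : Fin (m + 1) → H,
      (∀ i, d i ∈ V i) ∧ v = ∑ i, d i ∧ (∑ i, ‖d i‖ ^ 2) ≤ C0 ^ 2 * ‖v‖ ^ 2) :
    ∀ v : H, (C0 ^ 2)⁻¹ * ‖v‖ ^ 2 ≤ ⟪(∑ i, P i) v, v⟫ := by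
  intro v
  obtain ⟨d, hdmem, hdv, hdsum⟩ := hstable v
  -- ⟪(∑ P i) v, v⟫ = ∑ ‖P i v‖²
  have hA : ⟪(∑ i, P i) v, v⟫ = ∑ i, ‖P i v‖ ^ 2 := by
    rw [LinearMap.sum_apply, sum_inner]
    refine Finset.sum_congr rfl fun i _ => ?_
    have h1 := hPproj i v (P i v) (hPmem i v)
    rw [real_inner_self_eq_norm_sq] at h1
    rw [real_inner_comm] at h1
    linarith [h1]
  have hAnn : (0:ℝ) ≤ ∑ i, ‖P i v‖ ^ 2 :=
    Finset.sum_nonneg fun i _ => sq_nonneg _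
  -- key: ‖v‖² = ∑ ⟪P i v, d i⟫ ≤ ∑ ‖P i v‖ ‖d i‖
  have hkey : ‖v‖ ^ 2 ≤ ∑ i, ‖P i v‖ * ‖d i‖ := by
    have : ‖v‖ ^ 2 = ∑ i, ⟪P i v, d i⟫ := by
      calc ‖v‖ ^ 2 = ⟪v, v⟫ := (real_inner_self_eq_norm_sq v).symm
        _ = ⟪v, ∑ i, d i⟫ := by rw [← hdv]
        _ = ∑ i, ⟪v, d i⟫ := inner_sum _ _ _
        _ = ∑ i, ⟪P i v, d i⟫ := by
            exact Finset.sum_congr rfl fun i _ => (hPproj i v (d i) (hdmem i)).symm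
    rw [this]
    exact Finset.sum_le_sum fun i _ => real_inner_le_norm _ _
  -- Cauchy-Schwarz for sums
  have hCS : (∑ i, ‖P i v‖ * ‖d i‖) ^ 2 ≤ (∑ i, ‖P i v‖ ^ 2) * ∑ i, ‖d i‖ ^ 2 :=
    Finset.sum_mul_sq_le_sq_mul_sq _ _ _
  have h4 : ‖v‖ ^ 2 * ‖v‖ ^ 2 ≤ (∑ i, ‖P i v‖ ^ 2) * (C0 ^ 2 * ‖v‖ ^ 2) := by
    have h1 : (‖v‖ ^ 2) ^ 2 ≤ (∑ i, ‖P i v‖ * ‖d i‖) ^ 2 :=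
      pow_le_pow_left₀ (sq_nonneg _) hkey 2
    have h2 : (∑ i, ‖P i v‖ ^ 2) * (∑ i, ‖d i‖ ^ 2) ≤
        (∑ i, ‖P i v‖ ^ 2) * (C0 ^ 2 * ‖v‖ ^ 2) :=
      mul_le_mul_of_nonneg_left hdsum hAnn
    nlinarith
  rw [hA]
  rcases eq_or_ne (‖v‖ ^ 2) 0 with h0 | h0
  · rw [h0, mul_zero]; exact hAnn
  · have hpos : 0 < ‖v‖ ^ 2 := lt_of_le_of_ne (sq_nonneg _) (Ne.symm h0)
    rw [inv_mul_le_iff₀ (by positivity)]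
    nlinarith [mul_pos hpos hpos]
end
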